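/- arXiv:1712.09897 — 5 statements merged into one kernel-verified Lean document; each statement's English description precedes it below -/
import Mathlib

section
/- Let φ : (0,∞) → ℝ be C² with φ'' > 0 and suppose 1/φ'' is concave. Then for any t ∈ (0,1) the function F_t(x,y) := t·φ(y) + (1−t)·φ(x) − φ(t·y + (1−t)·x) is convex on (0,∞)². -/
/-! Convexity of `F_t` on a convex set reduces to convexity along each segment. Along a segment
with direction `(b, a)` through `(x, y)`, the second derivative of `F_t` is
`t φ''(y) a² + (1 - t) φ''(x) b² - φ''(m) (t a + (1 - t) b)²` with `m = t y + (1 - t) x`.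
Concavity of `1 / φ''` gives `1 / φ''(m) ≥ t / φ''(y) + (1 - t) / φ''(x)`, and the weighted
Cauchy–Schwarz inequality `(t a + (1 - t) b)² ≤ (t / A + (1 - t) / B) (t A a² + (1 - t) B b²)`
for `A = φ''(y)`, `B = φ''(x)` then makes it nonnegative. -/

open Set

theorem convexOn_of_convexOn_segment {𝕜 E β : Type*} [Field 𝕜] [LinearOrder 𝕜]
    [IsStrictOrderedRing 𝕜] [AddCommGroup E] [Module 𝕜 E] [AddCommMonoid β] [PartialOrder β]
    [IsOrderedAddMonoid β] [Module 𝕜 β] {s : Set E} {f : E → β} (hs : Convex 𝕜 s)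
    (h : ∀ x ∈ s, ∀ y ∈ s, ConvexOn 𝕜 (Icc 0 1) fun r : 𝕜 => f (x + r • (y - x))) :
    ConvexOn 𝕜 s f := by
  refine ⟨hs, fun x hx y hy a b ha hb hab => ?_⟩
  have key := (h x hx y hy).2 (left_mem_Icc.2 zero_le_one) (right_mem_Icc.2 zero_le_one) ha hb hab
  simp only [smul_eq_mul, mul_one, zero_smul, add_zero, one_smul, add_sub_cancel] at key
  convert key using 2
  rw [eq_sub_of_add_eq hab]
  module

theorem ContDiffOn.hasDerivAt_deriv_iteratedDeriv_two {𝕜 F : Type*} [NontriviallyNormedField 𝕜]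
    [NormedAddCommGroup F] [NormedSpace 𝕜 F] {f : 𝕜 → F} {U : Set 𝕜} (hf : ContDiffOn 𝕜 2 f U)
    (hU : IsOpen U) {x : 𝕜} (hx : x ∈ U) : HasDerivAt (deriv f) (iteratedDeriv 2 f x) x := by
  rw [iteratedDeriv_succ, iteratedDeriv_one]
  exact (((hf.deriv_of_isOpen hU (by norm_num)).differentiableOn one_ne_zero).differentiableAt
    (hU.mem_nhds hx)).hasDerivAt

theorem sq_add_le_div_add_div_mul {p q A B a b : ℝ} (hp : 0 ≤ p) (hq : 0 ≤ q) (hA : 0 < A)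
    (hB : 0 < B) : (p * a + q * b) ^ 2 ≤ (p / A + q / B) * (p * A * a ^ 2 + q * B * b ^ 2) := by
  rw [div_add_div _ _ hA.ne' hB.ne', div_mul_eq_mul_div, le_div_iff₀ (by positivity)]
  nlinarith [mul_nonneg (mul_nonneg hp hq) (sq_nonneg (A * a - B * b))]

theorem mul_sq_le_of_concaveOn_one_div {h : ℝ → ℝ} {U : Set ℝ} (hpos : ∀ x ∈ U, 0 < h x)
    (hconc : ConcaveOn ℝ U fun s => 1 / h s) {t x y : ℝ} (ht : t ∈ Icc (0:ℝ) 1) (hx : x ∈ U)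
    (hy : y ∈ U) (a b : ℝ) :
    h (t * y + (1 - t) * x) * (t * a + (1 - t) * b) ^ 2
      ≤ t * h y * a ^ 2 + (1 - t) * h x * b ^ 2 := by
  obtain ⟨ht0, ht1⟩ := ht
  have hmU := hconc.1 hy hx ht0 (sub_nonneg.2 ht1) (add_sub_cancel t 1)
  have hm := hconc.2 hy hx ht0 (sub_nonneg.2 ht1) (add_sub_cancel t 1)
  simp only [smul_eq_mul, mul_one_div] at hm hmU
  have hx₀ := hpos x hx
  have hy₀ := hpos y hy
  set C := h (t * y + (1 - t) * x)
  have hC : 0 < C := hpos _ hmU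
  calc C * (t * a + (1 - t) * b) ^ 2
      ≤ C * ((t / h y + (1 - t) / h x) * (t * h y * a ^ 2 + (1 - t) * h x * b ^ 2)) := by
        gcongr
        exact sq_add_le_div_add_div_mul ht0 (sub_nonneg.2 ht1) hy₀ hx₀
    _ ≤ C * (1 / C * (t * h y * a ^ 2 + (1 - t) * h x * b ^ 2)) := by gcongr
    _ = t * h y * a ^ 2 + (1 - t) * h x * b ^ 2 := by field_simp

/-- `jensenGap φ t (x, y)` is the paper's `F_t(x, y)`. -/
def jensenGap (φ : ℝ → ℝ) (t : ℝ) (q : ℝ × ℝ) : ℝ :=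
  t * φ q.2 + (1 - t) * φ q.1 - φ (t * q.2 + (1 - t) * q.1)

section JensenGap

variable {φ φ' φ'' : ℝ → ℝ} {U : Set ℝ} {t : ℝ}

theorem convexOn_jensenGap_comp_segment (hφ : ∀ x ∈ U, HasDerivAt φ (φ' x) x)
    (hφ' : ∀ x ∈ U, HasDerivAt φ' (φ'' x) x) (hpos : ∀ x ∈ U, 0 < φ'' x)
    (hconc : ConcaveOn ℝ U fun s => 1 / φ'' s) (ht : t ∈ Icc (0:ℝ) 1) {p q : ℝ × ℝ}
    (hp : p ∈ U ×ˢ U) (hq : q ∈ U ×ˢ U) :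
    ConvexOn ℝ (Icc (0:ℝ) 1) fun r => jensenGap φ t (p + r • (q - p)) := by
  set d := q - p
  set e := t * d.2 + (1 - t) * d.1
  set X : ℝ → ℝ := fun s => (p + s • d).1
  set Y : ℝ → ℝ := fun s => (p + s • d).2
  set M : ℝ → ℝ := fun s => t * Y s + (1 - t) * X s
  have hX (r : ℝ) : HasDerivAt X d.1 r := (hasDerivAt_mul_const _).const_add _
  have hY (r : ℝ) : HasDerivAt Y d.2 r := (hasDerivAt_mul_const _).const_add _
  have hM (r : ℝ) : HasDerivAt M e r := ((hY r).const_mul t).add ((hX r).const_mul (1 - t))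
  have hmem (r : ℝ) (hr : r ∈ Icc (0:ℝ) 1) : X r ∈ U ∧ Y r ∈ U ∧ M r ∈ U := by
    obtain ⟨hXr, hYr⟩ := (hconc.1.prod hconc.1).add_smul_sub_mem hp hq hr
    exact ⟨hXr, hYr, hconc.1 hYr hXr ht.1 (sub_nonneg.2 ht.2) (add_sub_cancel t 1)⟩
  set g' : ℝ → ℝ := fun r => t * (φ' (Y r) * d.2) + (1 - t) * (φ' (X r) * d.1) - φ' (M r) * e
  set g'' : ℝ → ℝ := fun r =>
    t * (φ'' (Y r) * d.2 * d.2) + (1 - t) * (φ'' (X r) * d.1 * d.1) - φ'' (M r) * e * e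
  have hg (r : ℝ) (hr : r ∈ Icc (0:ℝ) 1) :
      HasDerivAt (fun r => jensenGap φ t (p + r • d)) (g' r) r := by
    obtain ⟨hXr, hYr, hMr⟩ := hmem r hr
    exact ((((hφ _ hYr).comp r (hY r)).const_mul t).add
      (((hφ _ hXr).comp r (hX r)).const_mul (1 - t))).sub ((hφ _ hMr).comp r (hM r))
  have hg' (r : ℝ) (hr : r ∈ Icc (0:ℝ) 1) : HasDerivAt g' (g'' r) r := by
    obtain ⟨hXr, hYr, hMr⟩ := hmem r hr
    exact (((((hφ' _ hYr).comp r (hY r)).mul_const d.2).const_mul t).add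
      ((((hφ' _ hXr).comp r (hX r)).mul_const d.1).const_mul (1 - t))).sub
      (((hφ' _ hMr).comp r (hM r)).mul_const e)
  refine convexOn_of_hasDerivWithinAt2_nonneg (f' := g') (f'' := g'') (convex_Icc 0 1)
    (fun r hr => (hg r hr).continuousAt.continuousWithinAt) ?_ ?_ ?_ <;> rw [interior_Icc]
  · exact fun r hr => (hg r (Ioo_subset_Icc_self hr)).hasDerivWithinAt
  · exact fun r hr => (hg' r (Ioo_subset_Icc_self hr)).hasDerivWithinAt
  intro r hr
  obtain ⟨hXr, hYr, -⟩ := hmem r (Ioo_subset_Icc_self hr)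
  have := mul_sq_le_of_concaveOn_one_div hpos hconc ht hXr hYr d.2 d.1
  simp only [g'']
  linarith

theorem convexOn_jensenGap (hφ : ∀ x ∈ U, HasDerivAt φ (φ' x) x)
    (hφ' : ∀ x ∈ U, HasDerivAt φ' (φ'' x) x) (hpos : ∀ x ∈ U, 0 < φ'' x)
    (hconc : ConcaveOn ℝ U fun s => 1 / φ'' s) (ht : t ∈ Icc (0:ℝ) 1) :
    ConvexOn ℝ (U ×ˢ U) (jensenGap φ t) :=
  convexOn_of_convexOn_segment (hconc.1.prod hconc.1) fun _ hp _ hq =>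
    convexOn_jensenGap_comp_segment hφ hφ' hpos hconc ht hp hq

end JensenGap

theorem phi_Ft_convex (φ : ℝ → ℝ)
    (hφ : ContDiffOn ℝ 2 φ (Ioi 0))
    (hφ'' : ∀ x ∈ Ioi (0:ℝ), 0 < iteratedDeriv 2 φ x)
    (hconc : ConcaveOn ℝ (Ioi 0) (fun s => 1 / iteratedDeriv 2 φ s))
    (t : ℝ) (ht : t ∈ Ioo (0:ℝ) 1) :
    ConvexOn ℝ ((Ioi (0:ℝ)) ×ˢ (Ioi (0:ℝ)))
      (fun q : ℝ × ℝ => t * φ q.2 + (1 - t) * φ q.1 - φ (t * q.2 + (1 - t) * q.1)) := by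
  have hderiv (x : ℝ) (hx : x ∈ Ioi (0:ℝ)) : HasDerivAt φ (deriv φ x) x :=
    ((hφ.differentiableOn two_ne_zero).differentiableAt (isOpen_Ioi.mem_nhds hx)).hasDerivAt
  exact convexOn_jensenGap hderiv (fun _ hx => hφ.hasDerivAt_deriv_iteratedDeriv_two isOpen_Ioi hx)
    hφ'' hconc (Ioo_subset_Icc_self ht)
end

section
/- Let γ be a probability measure, φ : (0,∞) → ℝ C² with φ'' > 0 and 1/φ'' concave. Then the φ-entropy functional E_γ[w] := ∫ φ(w) dγ − φ(∫ w dγ) is convex on the set of positive integrable functions w with φ(w) integrable. -/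
/-!
For fixed `t ∈ [0, 1]` let `G(u, v) = φ(t u + (1 - t) v) - t φ(u) - (1 - t) φ(v)`. Convexity of the
φ-entropy is the Jensen-type inequality `∫ G(w₁, w₀) dγ ≤ G(∫ w₁ dγ, ∫ w₀ dγ)`, so it suffices that
`G` is concave on `(0, ∞)²`; then `G` lies below its tangent plane at the point of means, and
integrating that inequality gives the claim. Along a segment with direction `(a, b)` the second
derivative of `G` is `φ''(s) (t a + (1 - t) b)² - t φ''(u) a² - (1 - t) φ''(v) b²`, where
`s = t u + (1 - t) v`. Concavity of `1/φ''` gives `φ''(s) (t/φ''(u) + (1 - t)/φ''(v)) ≤ 1`,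
and with the Cauchy–Schwarz inequality
`(t a + (1 - t) b)² ≤ (t/φ''(u) + (1 - t)/φ''(v)) (t φ''(u) a² + (1 - t) φ''(v) b²)`
this second derivative is nonpositive.
-/

open Set MeasureTheory

lemma sq_add_le_div_add_div_mul_s3 {t s a b P Q : ℝ} (ht : 0 ≤ t) (hs : 0 ≤ s) (hP : 0 < P)
    (hQ : 0 < Q) : (t * a + s * b) ^ 2 ≤ (t / P + s / Q) * (t * P * a ^ 2 + s * Q * b ^ 2) := by
  have hdiff : (t / P + s / Q) * (t * P * a ^ 2 + s * Q * b ^ 2) - (t * a + s * b) ^ 2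
      = t * s * (P * a - Q * b) ^ 2 / (P * Q) := by
    field_simp
    ring
  have : 0 ≤ t * s * (P * a - Q * b) ^ 2 / (P * Q) := by positivity
  linarith

lemma sub_le_mul_of_hasDerivAt_of_deriv2_nonpos {f f' f'' : ℝ → ℝ} {a b : ℝ} (hab : a < b)
    (hf : ∀ x ∈ Icc a b, HasDerivAt f (f' x) x) (hf' : ∀ x ∈ Ioo a b, HasDerivAt f' (f'' x) x)
    (hf'' : ∀ x ∈ Ioo a b, f'' x ≤ 0) : f b - f a ≤ f' a * (b - a) := by
  have hconc : ConcaveOn ℝ (Icc a b) f := by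
    refine concaveOn_of_hasDerivWithinAt2_nonpos (f' := f') (f'' := f'') (convex_Icc a b)
      (fun x hx => (hf x hx).continuousAt.continuousWithinAt) ?_ ?_ ?_ <;> rw [interior_Icc]
    · exact fun x hx => (hf x (Ioo_subset_Icc_self hx)).hasDerivWithinAt
    · exact fun x hx => (hf' x hx).hasDerivWithinAt
    · exact hf''
  have ha := left_mem_Icc.2 hab.le
  have hslope := hconc.slope_le_of_hasDerivAt ha (right_mem_Icc.2 hab.le) hab (hf a ha)
  rwa [slope_def_field, div_le_iff₀ (sub_pos.2 hab)] at hslope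

lemma ContDiffOn.hasDerivAt_deriv {φ : ℝ → ℝ} {s : Set ℝ} (hφ : ContDiffOn ℝ 1 φ s)
    (hs : IsOpen s) {x : ℝ} (hx : x ∈ s) :
    HasDerivAt φ (deriv φ x) x :=
  ((hφ.differentiableOn one_ne_zero).differentiableAt (hs.mem_nhds hx)).hasDerivAt

section

variable {I : Set ℝ} {φ φ' φ'' : ℝ → ℝ} {t : ℝ}

lemma mul_sq_le_of_concaveOn_one_div_s3 (hI : Convex ℝ I) (hpos : ∀ s ∈ I, 0 < φ'' s)
    (hconc : ConcaveOn ℝ I (fun s => 1 / φ'' s)) (ht0 : 0 ≤ t) (ht1 : t ≤ 1) {u v : ℝ}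
    (hu : u ∈ I) (hv : v ∈ I) (a b : ℝ) :
    φ'' (t * u + (1 - t) * v) * (t * a + (1 - t) * b) ^ 2
      ≤ t * φ'' u * a ^ 2 + (1 - t) * φ'' v * b ^ 2 := by
  have ht1' : 0 ≤ 1 - t := by linarith
  have hR : 0 < φ'' (t * u + (1 - t) * v) := hpos _ (hI hu hv ht0 ht1' (by ring))
  have hjensen : φ'' (t * u + (1 - t) * v) * (t / φ'' u + (1 - t) / φ'' v) ≤ 1 := by
    have hmid := hconc.2 hu hv ht0 ht1' (by ring)
    simp only [smul_eq_mul, mul_one_div] at hmid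
    rwa [le_div_iff₀' hR] at hmid
  have hX : 0 ≤ t * φ'' u * a ^ 2 + (1 - t) * φ'' v * b ^ 2 := by
    have := hpos u hu; have := hpos v hv; positivity
  calc φ'' (t * u + (1 - t) * v) * (t * a + (1 - t) * b) ^ 2
      ≤ φ'' (t * u + (1 - t) * v) * ((t / φ'' u + (1 - t) / φ'' v)
          * (t * φ'' u * a ^ 2 + (1 - t) * φ'' v * b ^ 2)) :=
        mul_le_mul_of_nonneg_left
          (sq_add_le_div_add_div_mul_s3 ht0 ht1' (hpos u hu) (hpos v hv)) hR.le
    _ ≤ t * φ'' u * a ^ 2 + (1 - t) * φ'' v * b ^ 2 := by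
        rw [← mul_assoc]
        exact mul_le_of_le_one_left hX hjensen

lemma gap_le_tangent_plane (hI : Convex ℝ I) (hφ : ∀ s ∈ I, HasDerivAt φ (φ' s) s)
    (hφ' : ∀ s ∈ I, HasDerivAt φ' (φ'' s) s) (hpos : ∀ s ∈ I, 0 < φ'' s)
    (hconc : ConcaveOn ℝ I (fun s => 1 / φ'' s)) (ht0 : 0 ≤ t) (ht1 : t ≤ 1)
    {m₁ m₀ u v : ℝ} (hm₁ : m₁ ∈ I) (hm₀ : m₀ ∈ I) (hu : u ∈ I) (hv : v ∈ I) :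
    φ (t * u + (1 - t) * v) - t * φ u - (1 - t) * φ v
      ≤ φ (t * m₁ + (1 - t) * m₀) - t * φ m₁ - (1 - t) * φ m₀
        + t * (φ' (t * m₁ + (1 - t) * m₀) - φ' m₁) * (u - m₁)
        + (1 - t) * (φ' (t * m₁ + (1 - t) * m₀) - φ' m₀) * (v - m₀) := by
  have ht1' : 0 ≤ 1 - t := by linarith
  set A := u - m₁
  set B := v - m₀
  let p : ℝ → ℝ := fun θ => m₁ + θ * A
  let q : ℝ → ℝ := fun θ => m₀ + θ * B
  let s : ℝ → ℝ := fun θ => t * p θ + (1 - t) * q θ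
  have hp : ∀ θ ∈ Icc (0 : ℝ) 1, p θ ∈ I := fun θ hθ => hI.add_smul_sub_mem hm₁ hu hθ
  have hq : ∀ θ ∈ Icc (0 : ℝ) 1, q θ ∈ I := fun θ hθ => hI.add_smul_sub_mem hm₀ hv hθ
  have hs : ∀ θ ∈ Icc (0 : ℝ) 1, s θ ∈ I := fun θ hθ =>
    hI (hp θ hθ) (hq θ hθ) ht0 ht1' (by ring)
  have hp' (θ : ℝ) : HasDerivAt p A θ := (hasDerivAt_mul_const A).const_add m₁
  have hq' (θ : ℝ) : HasDerivAt q B θ := (hasDerivAt_mul_const B).const_add m₀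
  have hs' (θ : ℝ) : HasDerivAt s (t * A + (1 - t) * B) θ :=
    ((hp' θ).const_mul t).add ((hq' θ).const_mul (1 - t))
  -- The derivative of `θ ↦ G(p θ, q θ)` is written so that at `θ = 0` it is the tangent-plane term.
  have hk (θ : ℝ) (hθ : θ ∈ Icc (0 : ℝ) 1) : HasDerivAt
      (fun θ => φ (s θ) - t * φ (p θ) - (1 - t) * φ (q θ))
      (t * (φ' (s θ) - φ' (p θ)) * A + (1 - t) * (φ' (s θ) - φ' (q θ)) * B) θ := by
    have := (((hφ _ (hs θ hθ)).comp θ (hs' θ)).sub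
      (((hφ _ (hp θ hθ)).comp θ (hp' θ)).const_mul t)).sub
      (((hφ _ (hq θ hθ)).comp θ (hq' θ)).const_mul (1 - t))
    exact this.congr_deriv (by ring)
  have hk' (θ : ℝ) (hθ : θ ∈ Icc (0 : ℝ) 1) : HasDerivAt
      (fun θ => t * (φ' (s θ) - φ' (p θ)) * A + (1 - t) * (φ' (s θ) - φ' (q θ)) * B)
      (φ'' (s θ) * (t * A + (1 - t) * B) ^ 2 - t * φ'' (p θ) * A ^ 2
        - (1 - t) * φ'' (q θ) * B ^ 2) θ := by
    have hs'' := (hφ' _ (hs θ hθ)).comp θ (hs' θ)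
    have := (((hs''.sub ((hφ' _ (hp θ hθ)).comp θ (hp' θ))).const_mul t).mul_const A).add
      (((hs''.sub ((hφ' _ (hq θ hθ)).comp θ (hq' θ))).const_mul (1 - t)).mul_const B)
    exact this.congr_deriv (by ring)
  have hk'' (θ : ℝ) (hθ : θ ∈ Icc (0 : ℝ) 1) : φ'' (s θ) * (t * A + (1 - t) * B) ^ 2
      - t * φ'' (p θ) * A ^ 2 - (1 - t) * φ'' (q θ) * B ^ 2 ≤ 0 := by
    have := mul_sq_le_of_concaveOn_one_div_s3 hI hpos hconc ht0 ht1 (hp θ hθ) (hq θ hθ) A B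
    linarith
  have hsegment := sub_le_mul_of_hasDerivAt_of_deriv2_nonpos zero_lt_one hk
    (fun θ hθ => hk' θ (Ioo_subset_Icc_self hθ)) (fun θ hθ => hk'' θ (Ioo_subset_Icc_self hθ))
  simp only [p, q, s, zero_mul, add_zero, one_mul, sub_zero, mul_one, A, B,
    add_sub_cancel] at hsegment
  linarith

end

lemma integral_pos_of_pos {α : Type*} [MeasurableSpace α] {μ : Measure α} [NeZero μ]
    {f : α → ℝ} (hf : Integrable f μ) (hpos : ∀ x, 0 < f x) : 0 < ∫ x, f x ∂μ := by
  rw [integral_pos_iff_support_of_nonneg (fun x => (hpos x).le) hf,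
    Function.support_eq_univ fun x => (hpos x).ne']
  exact Measure.measure_univ_pos.2 (NeZero.ne μ)

lemma integral_le_of_le_affine {α : Type*} [MeasurableSpace α] {μ : Measure α}
    [IsProbabilityMeasure μ] {f g h : α → ℝ} (hf : Integrable f μ) (hg : Integrable g μ)
    (hh : Integrable h μ) {c a b : ℝ}
    (hle : ∀ᵐ x ∂μ, f x ≤ c + a * (g x - ∫ y, g y ∂μ) + b * (h x - ∫ y, h y ∂μ)) :
    ∫ x, f x ∂μ ≤ c := by
  have hg' : Integrable (fun x => a * (g x - ∫ y, g y ∂μ)) μ :=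
    (hg.sub (integrable_const _)).const_mul a
  have hh' : Integrable (fun x => b * (h x - ∫ y, h y ∂μ)) μ :=
    (hh.sub (integrable_const _)).const_mul b
  have hcg : Integrable (fun x => c + a * (g x - ∫ y, g y ∂μ)) μ := (integrable_const c).add hg'
  have hcgh : Integrable
      (fun x => c + a * (g x - ∫ y, g y ∂μ) + b * (h x - ∫ y, h y ∂μ)) μ := hcg.add hh'
  refine (integral_mono_ae hf hcgh hle).trans_eq ?_
  rw [integral_add hcg hh', integral_add (integrable_const c) hg', integral_const_mul,
    integral_const_mul, integral_sub hg (integrable_const _), integral_sub hh (integrable_const _)]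
  simp

theorem phi_entropy_convex {α : Type*} [MeasurableSpace α]
    (γ : Measure α) [IsProbabilityMeasure γ] (φ : ℝ → ℝ)
    (hφ : ContDiffOn ℝ 2 φ (Ioi 0))
    (hφ'' : ∀ s ∈ Ioi (0:ℝ), 0 < iteratedDeriv 2 φ s)
    (hconc : ConcaveOn ℝ (Ioi 0) (fun s => 1 / iteratedDeriv 2 φ s))
    (w₀ w₁ : α → ℝ)
    (hw₀pos : ∀ x, 0 < w₀ x) (hw₁pos : ∀ x, 0 < w₁ x)
    (hw₀int : Integrable w₀ γ) (hw₁int : Integrable w₁ γ)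
    (hφw₀ : Integrable (fun x => φ (w₀ x)) γ)
    (hφw₁ : Integrable (fun x => φ (w₁ x)) γ)
    (t : ℝ) (ht : t ∈ Icc (0:ℝ) 1)
    (hφwt : Integrable (fun x => φ (t * w₁ x + (1 - t) * w₀ x)) γ) :
    (∫ x, φ (t * w₁ x + (1 - t) * w₀ x) ∂γ)
        - φ (∫ x, (t * w₁ x + (1 - t) * w₀ x) ∂γ)
      ≤ t * ((∫ x, φ (w₁ x) ∂γ) - φ (∫ x, w₁ x ∂γ))
        + (1 - t) * ((∫ x, φ (w₀ x) ∂γ) - φ (∫ x, w₀ x ∂γ)) := by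
  have hderiv : ∀ s ∈ Ioi (0 : ℝ), HasDerivAt φ (deriv φ s) s :=
    fun s hs => (hφ.of_le one_le_two).hasDerivAt_deriv isOpen_Ioi hs
  have hderiv2 : ∀ s ∈ Ioi (0 : ℝ), HasDerivAt (deriv φ) (iteratedDeriv 2 φ s) s := by
    intro s hs
    rw [iteratedDeriv_succ, iteratedDeriv_one]
    exact (hφ.deriv_of_isOpen isOpen_Ioi le_rfl).hasDerivAt_deriv isOpen_Ioi hs
  have htangent (x : α) :=
    gap_le_tangent_plane (convex_Ioi 0) hderiv hderiv2 hφ'' hconc ht.1 ht.2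
      (integral_pos_of_pos hw₁int hw₁pos) (integral_pos_of_pos hw₀int hw₀pos)
      (hw₁pos x) (hw₀pos x)
  have hφwt₁ : Integrable (fun x => φ (t * w₁ x + (1 - t) * w₀ x) - t * φ (w₁ x)) γ :=
    hφwt.sub (hφw₁.const_mul t)
  have hgap := integral_le_of_le_affine
    (f := fun x => φ (t * w₁ x + (1 - t) * w₀ x) - t * φ (w₁ x) - (1 - t) * φ (w₀ x))
    (hφwt₁.sub (hφw₀.const_mul (1 - t))) hw₁int hw₀int (ae_of_all γ htangent)
  rw [integral_sub hφwt₁ (hφw₀.const_mul (1 - t)), integral_sub hφwt (hφw₁.const_mul t),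
    integral_const_mul, integral_const_mul] at hgap
  rw [integral_add (hw₁int.const_mul t) (hw₀int.const_mul (1 - t)), integral_const_mul,
    integral_const_mul]
  linarith
end

section
/- The eigenvalues of the 4×4 symmetric matrix M₂ = [[1, 1/2, −κ/2, −κ/4], [1/2, 1, −κ/4, −κ/2], [−κ/2, −κ/4, 2κ, κ], [−κ/4, −κ/2, κ, 2κ]] are λ₁ = (2κ+1−√(5κ²−4κ+1))/4, λ₂ = 3(2κ+1−√(5κ²−4κ+1))/4, λ₃ = (2κ+1+√(5κ²−4κ+1))/4, λ₄ = 3(2κ+1+√(5κ²−4κ+1))/4. -/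
/-!
`M₂` is the Kronecker product `B ⊗ A` of `A = !![1, 1/2; 1/2, 1]`, with eigenvalues `1/2` and `3/2`,
and `B = !![1, -κ/2; -κ/2, 2κ]`, with eigenvalues `(2κ + 1 ± √(5κ² - 4κ + 1)) / 2`. Hence
`det (x - M₂)` is the product of the characteristic polynomials of `B / 2` and `3B / 2`, and the
eigenvalues of `M₂` are the four products of an eigenvalue of `A` with one of `B`.
-/

open Matrix

theorem Matrix.mem_spectrum_iff_det_scalar_sub_eq_zero {n K : Type*} [Fintype n] [DecidableEq n]
    [Field K] (A : Matrix n n K) (x : K) :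
    x ∈ spectrum K A ↔ (scalar n x - A).det = 0 := by
  rw [mem_spectrum_iff_isRoot_charpoly, Polynomial.IsRoot.def, eval_charpoly]

noncomputable def M₂ (κ : ℝ) : Matrix (Fin 4) (Fin 4) ℝ :=
  !![1, 1/2, -κ/2, -κ/4;
     1/2, 1, -κ/4, -κ/2;
     -κ/2, -κ/4, 2*κ, κ;
     -κ/4, -κ/2, κ, 2*κ]

lemma det_scalar_sub_M₂ (κ x : ℝ) :
    (scalar (Fin 4) x - M₂ κ).det =
      (x ^ 2 - (2*κ + 1) / 2 * x + (8*κ - κ^2) / 16) *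
        (x ^ 2 - 3 * (2*κ + 1) / 2 * x + 9 * (8*κ - κ^2) / 16) := by
  simp only [scalar_apply, M₂, one_div, det_succ_row_zero, Nat.succ_eq_add_one, Nat.reduceAdd,
    Fin.isValue, Matrix.sub_apply, of_apply, cons_val', cons_val_fin_one, cons_val_zero,
    submatrix_apply, Fin.succ_zero_eq_one, Fin.succAbove, cons_val_one, submatrix_submatrix,
    Function.comp_apply, Fin.succ_one_eq_two, cons_val, det_unique, Fin.default_eq_zero,
    Fin.reduceSucc, Fin.castSucc_zero, Fin.sum_univ_succ, Fin.coe_ofNat_eq_mod, Nat.zero_mod,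
    pow_zero, one_mul, lt_self_iff_false, ↓reduceIte, Fin.castSucc_one, Finset.univ_unique,
    Fin.val_succ, Fin.val_eq_zero, zero_add, pow_one, Fin.castSucc_succ, neg_mul, neg_sub,
    Fin.succ_pos, Finset.sum_singleton, not_lt_zero, Fin.reduceCastSucc, even_two, Even.neg_pow,
    one_pow, Fin.reduceLT, diagonal_apply_eq, ne_eq, Fin.reduceEq, not_false_eq_true,
    diagonal_apply_ne, sub_zero, zero_sub, mul_neg, neg_neg, cons_val_succ, one_ne_zero,
    zero_ne_one, Fin.lt_one_iff]
  ring

lemma det_scalar_sub_M₂_eq_prod {κ s : ℝ} (hs : s ^ 2 = 5*κ^2 - 4*κ + 1) (x : ℝ) :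
    (scalar (Fin 4) x - M₂ κ).det =
      (x - (2*κ + 1 - s) / 4) * (x - (2*κ + 1 + s) / 4) *
        ((x - 3 * (2*κ + 1 - s) / 4) * (x - 3 * (2*κ + 1 + s) / 4)) := by
  have h_half : x ^ 2 - (2*κ + 1) / 2 * x + (8*κ - κ^2) / 16 =
      (x - (2*κ + 1 - s) / 4) * (x - (2*κ + 1 + s) / 4) := by
    linear_combination hs / 16
  have h_three_halves : x ^ 2 - 3 * (2*κ + 1) / 2 * x + 9 * (8*κ - κ^2) / 16 =
      (x - 3 * (2*κ + 1 - s) / 4) * (x - 3 * (2*κ + 1 + s) / 4) := by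
    linear_combination 9 * hs / 16
  rw [det_scalar_sub_M₂, h_half, h_three_halves]

theorem eigenvalues_M2_general (κ : ℝ) :
    spectrum ℝ (!![1, 1/2, -κ/2, -κ/4;
                   1/2, 1, -κ/4, -κ/2;
                   -κ/2, -κ/4, 2*κ, κ;
                   -κ/4, -κ/2, κ, 2*κ] : Matrix (Fin 4) (Fin 4) ℝ)
      = {(2*κ + 1 - Real.sqrt (5*κ^2 - 4*κ + 1)) / 4,
         3 * (2*κ + 1 - Real.sqrt (5*κ^2 - 4*κ + 1)) / 4,
         (2*κ + 1 + Real.sqrt (5*κ^2 - 4*κ + 1)) / 4,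
         3 * (2*κ + 1 + Real.sqrt (5*κ^2 - 4*κ + 1)) / 4} := by
  have hs : Real.sqrt (5*κ^2 - 4*κ + 1) ^ 2 = 5*κ^2 - 4*κ + 1 :=
    Real.sq_sqrt (by nlinarith [sq_nonneg (2*κ - 1)])
  ext x
  rw [← M₂, mem_spectrum_iff_det_scalar_sub_eq_zero, det_scalar_sub_M₂_eq_prod hs]
  simp only [mul_eq_zero, sub_eq_zero, Set.mem_insert_iff, Set.mem_singleton_iff]
  tauto

theorem eigenvalues_M2 (κ : ℝ) (hκ : 0 ≤ κ) :
    spectrum ℝ (!![1, 1/2, -κ/2, -κ/4;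
                   1/2, 1, -κ/4, -κ/2;
                   -κ/2, -κ/4, 2*κ, κ;
                   -κ/4, -κ/2, κ, 2*κ] : Matrix (Fin 4) (Fin 4) ℝ)
      = {(2*κ + 1 - Real.sqrt (5*κ^2 - 4*κ + 1)) / 4,
         3 * (2*κ + 1 - Real.sqrt (5*κ^2 - 4*κ + 1)) / 4,
         (2*κ + 1 + Real.sqrt (5*κ^2 - 4*κ + 1)) / 4,
         3 * (2*κ + 1 + Real.sqrt (5*κ^2 - 4*κ + 1)) / 4} :=
  eigenvalues_M2_general κ
end

section
/- For κ ∈ [0,8], the matrix M₂ = [[1, 1/2, −κ/2, −κ/4], [1/2, 1, −κ/4, −κ/2], [−κ/2, −κ/4, 2κ, κ], [−κ/4, −κ/2, κ, 2κ]] is positive semidefinite. -/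
/-!
In the coordinates `x₀ ± x₁`, `x₂ ± x₃` the quadratic form of `M₂` splits into two `2 × 2` blocks,
`[[3/2, -3κ/4], [-3κ/4, 3κ]]` and `[[1/2, -κ/4], [-κ/4, κ]]`, whose determinants are multiples of
`κ (8 - κ)`. Completing the square in each block writes `M₂` as a nonnegative combination of
rank-one matrices `w wᵀ` exactly when `0 ≤ κ ≤ 8`.
-/

open Matrix

lemma Matrix.posSemidef_smul_vecMulVec_self {n : Type*} [Fintype n] {c : ℝ} (hc : 0 ≤ c)
    (w : n → ℝ) : (c • vecMulVec w w).PosSemidef :=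
  (posSemidef_vecMulVec_self_star w).smul hc

lemma M₂_eq_sum_smul_vecMulVec (κ : ℝ) :
    M₂ κ = (3/4 : ℝ) • vecMulVec ![1, 1, -κ/2, -κ/2] ![1, 1, -κ/2, -κ/2]
      + (1/4 : ℝ) • vecMulVec ![1, -1, -κ/2, κ/2] ![1, -1, -κ/2, κ/2]
      + (3 * κ * (8 - κ) / 16) • vecMulVec ![0, 0, 1, 1] ![0, 0, 1, 1]
      + (κ * (8 - κ) / 16) • vecMulVec ![0, 0, 1, -1] ![0, 0, 1, -1] := by
  ext i j
  fin_cases i <;> fin_cases j <;> simp [M₂] <;> ring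

theorem M2_posSemidef (κ : ℝ) (hκ0 : 0 ≤ κ) (hκ8 : κ ≤ 8) :
    (!![1, 1/2, -κ/2, -κ/4;
        1/2, 1, -κ/4, -κ/2;
        -κ/2, -κ/4, 2*κ, κ;
        -κ/4, -κ/2, κ, 2*κ] : Matrix (Fin 4) (Fin 4) ℝ).PosSemidef := by
  have hκ : 0 ≤ κ * (8 - κ) := mul_nonneg hκ0 (sub_nonneg.2 hκ8)
  change (M₂ κ).PosSemidef
  rw [M₂_eq_sum_smul_vecMulVec]
  exact (((posSemidef_smul_vecMulVec_self (by norm_num) _).add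
    (posSemidef_smul_vecMulVec_self (by norm_num) _)).add
    (posSemidef_smul_vecMulVec_self (by linarith) _)).add
    (posSemidef_smul_vecMulVec_self (by linarith) _)
end

section
/- Let κ_p = (p−1)(2−p)/p > 0 for p ∈ (1,2) and let e : [0,∞) → [0,∞) be a C² function with e(t) → 0 and e'(t) → 0 as t → ∞, e' ≤ 0, satisfying e'' + 2e' ≥ κ_p·(e')²/(1 + e). Define F(s) := (1 + s − (1+s)^{κ_p})/(1 − κ_p). Then e'(t) + 2·F(e(t)) ≤ 0 for all t ≥ 0. -/
/-!
The profile `F = decayProfile κ` solves `F' = 1 + κ F / (1 + s)`. This ODE is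
exactly what makes the derivative of `G = (e' + 2 F(e)) / (1 + e) ^ κ` equal to
`((1 + e) (e'' + 2 e') - κ e'²) / (1 + e) ^ (κ + 1)`, which is nonnegative by the differential
inequality. So `G` is nondecreasing on `[0, ∞)`; it tends to `0` at infinity, hence `G ≤ 0`.
-/

open Real Filter Set Topology

noncomputable def decayProfile (κ s : ℝ) : ℝ :=
  (1 + s - (1 + s) ^ κ) / (1 - κ)

theorem decayProfile_zero (κ : ℝ) : decayProfile κ 0 = 0 := by
  simp [decayProfile]

theorem continuousAt_decayProfile_zero (κ : ℝ) : ContinuousAt (decayProfile κ) 0 := by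
  unfold decayProfile
  fun_prop (disch := norm_num)

theorem hasDerivAt_decayProfile {κ s : ℝ} (hκ : κ ≠ 1) (hs : 0 < 1 + s) :
    HasDerivAt (decayProfile κ) (1 + κ * decayProfile κ s / (1 + s)) s := by
  have h1s : HasDerivAt (fun s : ℝ => 1 + s) 1 s := (hasDerivAt_id s).const_add 1
  have hpow := h1s.rpow_const (p := κ) (Or.inl hs.ne')
  refine ((h1s.sub hpow).div_const (1 - κ)).congr_deriv ?_
  have : 1 - κ ≠ 0 := sub_ne_zero.mpr hκ.symm
  rw [rpow_sub_one hs.ne', decayProfile]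
  field_simp
  ring

theorem sub_one_mul_two_sub_div_ne_one (p : ℝ) : (p - 1) * (2 - p) / p ≠ 1 := by
  rcases eq_or_ne p 0 with rfl | hp
  · norm_num
  · rw [Ne, div_eq_one_iff_eq hp]
    nlinarith [sq_nonneg (p - 1)]

section Lyapunov

variable {κ : ℝ} {F u v : ℝ → ℝ}

theorem hasDerivAt_lyapunov {t w : ℝ} (hu : HasDerivAt u (v t) t) (hv : HasDerivAt v w t)
    (hpos : 0 < 1 + u t) (hF : HasDerivAt F (1 + κ * F (u t) / (1 + u t)) (u t)) :
    HasDerivAt (fun t => (v t + 2 * F (u t)) / (1 + u t) ^ κ)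
      (((1 + u t) * (w + 2 * v t) - κ * v t ^ 2) / (1 + u t) ^ (κ + 1)) t := by
  have hpow := (hu.const_add 1).rpow_const (p := κ) (Or.inl hpos.ne')
  have hA : (1 + u t) ^ κ ≠ 0 := (rpow_pos_of_pos hpos κ).ne'
  refine ((hv.add ((hF.comp t hu).const_mul 2)).div hpow hA).congr_deriv ?_
  simp only [Pi.add_apply, Function.comp_apply]
  rw [rpow_sub_one hpos.ne', rpow_add_one hpos.ne']
  field_simp
  ring

theorem monotoneOn_lyapunov {e : ℝ → ℝ} (he : ContDiff ℝ 2 e) (hpos : ∀ t ≥ 0, 0 < 1 + e t)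
    (hF : ∀ s, 0 < 1 + s → HasDerivAt F (1 + κ * F s / (1 + s)) s)
    (hineq : ∀ t ≥ 0, iteratedDeriv 2 e t + 2 * deriv e t ≥ κ * deriv e t ^ 2 / (1 + e t)) :
    MonotoneOn (fun t => (deriv e t + 2 * F (e t)) / (1 + e t) ^ κ) (Ici 0) := by
  have he1 : Differentiable ℝ e := he.differentiable (by norm_num)
  have he2 : Differentiable ℝ (deriv e) := by
    simpa using he.differentiable_iteratedDeriv 1 (by norm_num)
  have hG : ∀ t ≥ 0, HasDerivAt (fun t => (deriv e t + 2 * F (e t)) / (1 + e t) ^ κ)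
      (((1 + e t) * (iteratedDeriv 2 e t + 2 * deriv e t) - κ * deriv e t ^ 2)
        / (1 + e t) ^ (κ + 1)) t := fun t ht => by
    rw [iteratedDeriv_succ, iteratedDeriv_one]
    exact hasDerivAt_lyapunov (he1 t).hasDerivAt (he2 t).hasDerivAt (hpos t ht)
      (hF _ (hpos t ht))
  refine monotoneOn_of_hasDerivWithinAt_nonneg (convex_Ici 0)
    (fun t ht => (hG t ht).continuousAt.continuousWithinAt)
    (fun t ht => (hG t (interior_subset ht)).hasDerivWithinAt) fun t ht => ?_
  have ht : 0 ≤ t := interior_subset ht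
  have hnum := (div_le_iff₀' (hpos t ht)).mp (hineq t ht)
  exact div_nonneg (by linarith) (rpow_pos_of_pos (hpos t ht) _).le

theorem tendsto_lyapunov (hu : Tendsto u atTop (𝓝 0)) (hv : Tendsto v atTop (𝓝 0))
    (hF : ContinuousAt F 0) (hF0 : F 0 = 0) :
    Tendsto (fun t => (v t + 2 * F (u t)) / (1 + u t) ^ κ) atTop (𝓝 0) := by
  have hA : Tendsto (fun t => (1 + u t) ^ κ) atTop (𝓝 1) := by
    simpa using (hu.const_add 1).rpow_const (p := κ) (by norm_num)
  have := (hv.add ((hF.tendsto.comp hu).const_mul 2)).div hA one_ne_zero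
  simp only [hF0, mul_zero, add_zero, div_one] at this
  exact this

end Lyapunov

theorem MonotoneOn.le_of_tendsto_atTop {f : ℝ → ℝ} {a b : ℝ} (hf : MonotoneOn f (Ici a))
    (hlim : Tendsto f atTop (𝓝 b)) {t : ℝ} (ht : a ≤ t) : f t ≤ b :=
  ge_of_tendsto hlim <| (eventually_ge_atTop t).mono fun _ hs => hf ht (ht.trans hs) hs

theorem improved_decay_ode_general (p : ℝ)
    (e : ℝ → ℝ) (he : ContDiff ℝ 2 e)
    (henonneg : ∀ t ≥ 0, 0 ≤ e t)
    (helim : Tendsto e atTop (nhds 0))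
    (he'lim : Tendsto (deriv e) atTop (nhds 0))
    (hineq : ∀ t ≥ 0, iteratedDeriv 2 e t + 2 * deriv e t ≥
      ((p - 1) * (2 - p) / p) * (deriv e t)^2 / (1 + e t)) :
    ∀ t ≥ 0, deriv e t
        + 2 * ((1 + e t - (1 + e t) ^ ((p - 1) * (2 - p) / p)) / (1 - (p - 1) * (2 - p) / p))
      ≤ 0 := by
  set κ := (p - 1) * (2 - p) / p
  intro t ht
  have hpos : ∀ t ≥ 0, 0 < 1 + e t := fun t ht => by linarith [henonneg t ht]
  have hmono := monotoneOn_lyapunov he hpos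
    (fun _ => hasDerivAt_decayProfile (sub_one_mul_two_sub_div_ne_one p)) hineq
  have hlim := tendsto_lyapunov (κ := κ) helim he'lim
    (continuousAt_decayProfile_zero κ) (decayProfile_zero κ)
  have hG := hmono.le_of_tendsto_atTop hlim ht
  have := (div_le_iff₀ (rpow_pos_of_pos (hpos t ht) κ)).mp hG
  rwa [zero_mul] at this

theorem improved_decay_ode (p : ℝ) (hp : p ∈ Set.Ioo (1:ℝ) 2)
    (e : ℝ → ℝ) (he : ContDiff ℝ 2 e)
    (henonneg : ∀ t ≥ 0, 0 ≤ e t)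
    (helim : Tendsto e atTop (nhds 0))
    (he'lim : Tendsto (deriv e) atTop (nhds 0))
    (he'nonpos : ∀ t ≥ 0, deriv e t ≤ 0)
    (hineq : ∀ t ≥ 0, iteratedDeriv 2 e t + 2 * deriv e t ≥
      ((p - 1) * (2 - p) / p) * (deriv e t)^2 / (1 + e t)) :
    ∀ t ≥ 0, deriv e t
        + 2 * ((1 + e t - (1 + e t) ^ ((p - 1) * (2 - p) / p)) / (1 - (p - 1) * (2 - p) / p))
      ≤ 0 :=
  improved_decay_ode_general p e he henonneg helim he'lim hineq
end
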